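/- Let p = 2N+1 be a prime with p ≡ 1 (mod 4) and let J be the N×N matrix J_{k,x} = (2/√p)sin(2πkx/p). Then no vector v ∈ {-1,1}^N satisfies Jv = v or Jv = -v. Consequently the minimum of the quadratic form -(1/2)⟨σ, Jσ⟩ over spin configurations σ ∈ {-1,1}^N is strictly greater than -N/2. -/

import Mathlib

open Finset Matrix
open scoped Real IntermediateField

/-!
If `J v = ±v` for a sign vector `v`, the first row gives `∑ₓ vₓ sin(2πx/p) = ±√p/2`. Multiplied
by `2i`, the left side becomes `∑ₓ vₓ (ζˣ - ζ⁻ˣ) ∈ ℚ(ζ)` with `ζ = exp(2πi/p)`, and for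
`p ≡ 1 (mod 4)` the quadratic Gauss sum puts `√p` in `ℚ(ζ)` as well. Hence `i ∈ ℚ(ζ)`, which is
impossible: for odd `p` the roots of unity in `ℚ(ζ)` have order dividing `2p`.

The identity `∑ₓ sin(2πax/p) sin(2πbx/p) = (p/4) δ_ab` for `1 ≤ a, b ≤ N` makes `J` orthogonal,
so `⟨σ, Jσ⟩ < ⟨σ, σ⟩ = N` as soon as `Jσ ≠ σ`.
-/

theorem Complex.I_notMem_adjoin_of_isPrimitiveRoot {n : ℕ} (hn : Odd n) {ζ : ℂ}
    (hζ : IsPrimitiveRoot ζ n) : Complex.I ∉ ℚ⟮ζ⟯ := by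
  intro hI
  have : NeZero n := ⟨hn.pos.ne'⟩
  have : IsCyclotomicExtension {n} ℚ ℚ⟮ζ⟯ := by
    change IsCyclotomicExtension {n} ℚ ℚ⟮ζ⟯.toSubalgebra
    rw [IntermediateField.adjoin_simple_toSubalgebra_of_isAlgebraic
      (hζ.isIntegral hn.pos).tower_top.isAlgebraic]
    exact hζ.adjoin_isCyclotomicExtension ℚ
  have : NumberField ℚ⟮ζ⟯ := IsCyclotomicExtension.numberField {n} ℚ ℚ⟮ζ⟯
  have hIK : IsPrimitiveRoot (⟨Complex.I, hI⟩ : ℚ⟮ζ⟯) 4 :=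
    IsPrimitiveRoot.coe_submonoidClass_iff.mp Complex.isPrimitiveRoot_I
  have := hIK.dvd_of_isCyclotomicExtension n four_ne_zero
  obtain ⟨m, rfl⟩ := hn
  omega

theorem sqrt_mem_adjoin_of_isPrimitiveRoot {p : ℕ} [Fact p.Prime] (hp4 : p % 4 = 1) {ζ : ℂ}
    (hζ : IsPrimitiveRoot ζ p) : (√p : ℂ) ∈ ℚ⟮ζ⟯ := by
  have hchar : ringChar (ZMod p) ≠ 2 := by rw [ZMod.ringChar_zmod_n]; omega
  set χ : MulChar (ZMod p) ℂ := (quadraticChar (ZMod p)).ringHomComp (Int.castRingHom ℂ)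
  set ψ := AddChar.zmodChar p hζ.pow_eq_one
  have hg : gaussSum χ ψ ^ 2 = p := by
    rw [gaussSum_sq ((MulChar.ringHomComp_ne_one_iff Int.cast_injective).mpr
      (quadraticChar_ne_one hchar)) ((quadraticChar_isQuadratic _).comp _)
      (AddChar.zmodChar_primitive_of_primitive_root p hζ)]
    simp [quadraticChar_neg_one hchar, ZMod.χ₄_nat_one_mod_four hp4]
  have hgK : gaussSum χ ψ ∈ ℚ⟮ζ⟯ := sum_mem fun t _ => mul_mem (intCast_mem _ _) (by
    rw [AddChar.zmodChar_apply]; exact pow_mem (IntermediateField.mem_adjoin_simple_self ℚ ζ) _)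
  have hs : (√p : ℂ) ^ 2 = gaussSum χ ψ ^ 2 := by
    rw [hg, ← Complex.ofReal_pow, Real.sq_sqrt (Nat.cast_nonneg p)]; simp
  rcases sq_eq_sq_iff_eq_or_eq_neg.mp hs with h | h <;> rw [h]
  · exact hgK
  · exact neg_mem hgK

theorem two_mul_I_mul_sin_mem_adjoin (n : ℕ) (k : ℤ) :
    2 * Complex.I * (Real.sin (2 * π * k / n) : ℂ) ∈ ℚ⟮Complex.exp (2 * π * Complex.I / n)⟯ := by
  set ζ := Complex.exp (2 * π * Complex.I / n)
  have hpow (j : ℤ) : ζ ^ j = Complex.exp ((2 * π * j / n : ℝ) * Complex.I) := by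
    rw [← Complex.exp_int_mul]; push_cast; ring_nf
  have : 2 * Complex.I * (Real.sin (2 * π * k / n) : ℂ) = ζ ^ k - ζ ^ (-k) := by
    rw [hpow, hpow, Complex.ofReal_sin, Complex.sin]
    push_cast
    ring_nf
    rw [Complex.I_sq]; ring
  rw [this]
  exact sub_mem (zpow_mem (IntermediateField.mem_adjoin_simple_self ℚ ζ) k)
    (zpow_mem (IntermediateField.mem_adjoin_simple_self ℚ ζ) (-k))

theorem sum_intCast_mul_sin_ne_ratCast_mul_sqrt {p : ℕ} [Fact p.Prime] (hp4 : p % 4 = 1)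
    {ι : Type*} (s : Finset ι) (c k : ι → ℤ) {q : ℚ} (hq : q ≠ 0) :
    ∑ x ∈ s, c x * Real.sin (2 * π * k x / p) ≠ q * √p := by
  intro h
  set ζ := Complex.exp (2 * π * Complex.I / p)
  have hζ : IsPrimitiveRoot ζ p := Complex.isPrimitiveRoot_exp p (Fact.out : p.Prime).ne_zero
  set z : ℂ := ((2 * ∑ x ∈ s, c x * Real.sin (2 * π * k x / p) : ℝ) : ℂ)
  have hz : z ≠ 0 := by
    have : (0 : ℝ) < √p := Real.sqrt_pos.mpr (Nat.cast_pos.mpr (Fact.out : p.Prime).pos)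
    simp [z, h, hq, this.ne']
  have hzK : z ∈ ℚ⟮ζ⟯ := by
    simp only [z, h, Complex.ofReal_mul, Complex.ofReal_ratCast]
    exact mul_mem (ofNat_mem _ 2) (mul_mem (SubfieldClass.ratCast_mem _ q)
      (sqrt_mem_adjoin_of_isPrimitiveRoot hp4 hζ))
  have hIzK : Complex.I * z ∈ ℚ⟮ζ⟯ := by
    have : Complex.I * z = ∑ x ∈ s, c x * (2 * Complex.I * (Real.sin (2 * π * k x / p) : ℂ)) := by
      simp only [z]
      push_cast
      rw [mul_sum, mul_sum]
      exact sum_congr rfl fun x _ => by ring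
    rw [this]
    exact sum_mem fun x _ => mul_mem (intCast_mem _ _) (two_mul_I_mul_sin_mem_adjoin p (k x))
  apply Complex.I_notMem_adjoin_of_isPrimitiveRoot (Nat.odd_iff.mpr (by omega)) hζ
  simpa [hz] using div_mem hIzK hzK

theorem sum_range_cos_mul_succ {N : ℕ} {θ : ℝ} (hθ : Real.sin (θ / 2) ≠ 0)
    (hNθ : Real.sin ((2 * N + 1) * θ / 2) = 0) :
    ∑ i ∈ range N, Real.cos (θ * (i + 1)) = -1 / 2 := by
  have h := Real.sin_mul_sum_cos N θ θ
  have hprod : Real.sin (N * θ / 2) * Real.cos ((N - 1) * θ / 2 + θ) = -(Real.sin (θ / 2) / 2) := by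
    have := Real.sin_add (N * θ / 2) ((N + 1) * θ / 2)
    have h2 := Real.sin_sub (N * θ / 2) ((N + 1) * θ / 2)
    rw [show N * θ / 2 + (N + 1) * θ / 2 = (2 * N + 1) * θ / 2 by ring, hNθ] at this
    rw [show N * θ / 2 - (N + 1) * θ / 2 = -(θ / 2) by ring, Real.sin_neg] at h2
    rw [show (N - 1) * θ / 2 + θ = (N + 1) * θ / 2 by ring]
    linarith
  rw [hprod] at h
  field_simp at h ⊢
  linarith

theorem sum_range_cos_two_pi_mul_succ {N : ℕ} {m : ℤ} (hm : ¬ (2 * N + 1 : ℤ) ∣ m) :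
    ∑ i ∈ range N, Real.cos (2 * π * m / (2 * N + 1) * (i + 1)) = -1 / 2 := by
  have hp : (2 * N + 1 : ℝ) ≠ 0 := by positivity
  apply sum_range_cos_mul_succ
  · rw [show 2 * π * m / (2 * N + 1) / 2 = π * m / (2 * N + 1) by ring, Ne, Real.sin_eq_zero_iff]
    rintro ⟨k, hk⟩
    field_simp at hk
    have : (m : ℝ) = ((2 * N + 1 : ℤ) * k : ℤ) := by push_cast; linarith
    exact hm ⟨k, by exact_mod_cast this⟩
  · rw [show (2 * N + 1) * (2 * π * m / (2 * N + 1)) / 2 = m * π by field_simp]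
    exact Real.sin_int_mul_pi m

theorem sum_sin_mul_sin {N a b : ℕ} (ha : a ∈ Icc 1 N) (hb : b ∈ Icc 1 N) :
    ∑ i ∈ range N, Real.sin (2 * π * a * (i + 1) / (2 * N + 1)) *
      Real.sin (2 * π * b * (i + 1) / (2 * N + 1)) = if a = b then (2 * N + 1 : ℝ) / 4 else 0 := by
  simp only [mem_Icc] at ha hb
  have hsum : ¬ (2 * N + 1 : ℤ) ∣ (a + b : ℤ) := fun h => by
    have := Int.le_of_dvd (by omega) h
    omega
  have hdiff (hab : a ≠ b) : ¬ (2 * N + 1 : ℤ) ∣ (a - b : ℤ) := fun h => by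
    have := Int.eq_zero_of_abs_lt_dvd h (by rw [abs_lt]; omega)
    omega
  have hterm (i : ℕ) : Real.sin (2 * π * a * (i + 1) / (2 * N + 1)) *
      Real.sin (2 * π * b * (i + 1) / (2 * N + 1)) =
      (Real.cos (2 * π * ((a - b : ℤ) : ℝ) / (2 * N + 1) * (i + 1)) -
        Real.cos (2 * π * ((a + b : ℤ) : ℝ) / (2 * N + 1) * (i + 1))) / 2 := by
    set u := 2 * π * a * (i + 1) / (2 * N + 1)
    set v := 2 * π * b * (i + 1) / (2 * N + 1)
    rw [show 2 * π * ((a - b : ℤ) : ℝ) / (2 * N + 1) * (i + 1) = u - v by push_cast; ring,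
      show 2 * π * ((a + b : ℤ) : ℝ) / (2 * N + 1) * (i + 1) = u + v by push_cast; ring,
      Real.cos_sub, Real.cos_add]
    ring
  rw [sum_congr rfl fun i _ => hterm i, ← sum_div, sum_sub_distrib,
    sum_range_cos_two_pi_mul_succ hsum]
  split_ifs with hab
  · subst hab
    simp only [sub_self, Int.cast_zero, mul_zero, zero_div, zero_mul, Real.cos_zero, sum_const,
      card_range, nsmul_eq_mul, mul_one]
    ring
  · rw [sum_range_cos_two_pi_mul_succ (hdiff hab)]
    ring

noncomputable def sineMatrix (N : ℕ) : Matrix (Fin N) (Fin N) ℝ :=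
  of fun k x => 2 / √(2 * N + 1) * Real.sin (2 * π * (k + 1 : ℕ) * (x + 1 : ℕ) / (2 * N + 1))

theorem sineMatrix_transpose (N : ℕ) : (sineMatrix N)ᵀ = sineMatrix N := by
  ext k x
  simp only [transpose_apply, sineMatrix, of_apply]
  ring_nf

theorem sineMatrix_mul_self (N : ℕ) : sineMatrix N * sineMatrix N = 1 := by
  ext k l
  have hp : (0 : ℝ) < 2 * N + 1 := by positivity
  have hsq : 2 / √(2 * N + 1) * (2 / √(2 * N + 1)) = 4 / (2 * N + 1) := by
    rw [div_mul_div_comm, Real.mul_self_sqrt hp.le]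
    norm_num
  have hmem (j : Fin N) : (j + 1 : ℕ) ∈ Icc 1 N := mem_Icc.mpr ⟨by omega, j.isLt⟩
  have hsum := sum_sin_mul_sin (hmem k) (hmem l)
  rw [← Fin.sum_univ_eq_sum_range (fun i => Real.sin (2 * π * (k + 1 : ℕ) * (i + 1) / (2 * N + 1)) *
      Real.sin (2 * π * (l + 1 : ℕ) * (i + 1) / (2 * N + 1)))] at hsum
  simp only [mul_apply, sineMatrix, of_apply, one_apply]
  calc _ = 4 / (2 * N + 1) * ∑ j : Fin N,
        Real.sin (2 * π * (k + 1 : ℕ) * (j + 1) / (2 * N + 1)) *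
          Real.sin (2 * π * (l + 1 : ℕ) * (j + 1) / (2 * N + 1)) := by
        rw [mul_sum, ← hsq]
        refine sum_congr rfl fun j _ => ?_
        push_cast
        ring_nf
    _ = _ := by
        rw [hsum]
        simp only [add_left_inj, Fin.val_inj]
        split_ifs
        · field_simp
        · rw [mul_zero]

theorem dotProduct_mulVec_lt_of_transpose_mul_self {R n : Type*} [CommRing R] [LinearOrder R]
    [IsStrictOrderedRing R] [Fintype n] [DecidableEq n] {A : Matrix n n R} (hA : Aᵀ * A = 1)
    {v : n → R} (hv : A *ᵥ v ≠ v) :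
    v ⬝ᵥ (A *ᵥ v) < v ⬝ᵥ v := by
  have hnorm : (A *ᵥ v) ⬝ᵥ (A *ᵥ v) = v ⬝ᵥ v := by
    rw [dotProduct_mulVec, ← mulVec_transpose, mulVec_mulVec, hA, one_mulVec]
  have hpos : 0 < (A *ᵥ v - v) ⬝ᵥ (A *ᵥ v - v) :=
    (Fintype.sum_nonneg fun _ => mul_self_nonneg _).lt_of_ne
      (Ne.symm (mt dotProduct_self_eq_zero.mp (sub_ne_zero.mpr hv)))
  rw [sub_dotProduct, dotProduct_sub, dotProduct_sub, hnorm, dotProduct_comm (A *ᵥ v) v] at hpos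
  linarith

theorem sineMatrix_mulVec_intCast_ne_ratCast {N : ℕ} [Fact (2 * N + 1).Prime]
    (h4 : (2 * N + 1) % 4 = 1) (c : Fin N → ℤ) (k : Fin N) {q : ℚ} (hq : q ≠ 0) :
    (sineMatrix N *ᵥ fun x => (c x : ℝ)) k ≠ q := by
  intro h
  apply sum_intCast_mul_sin_ne_ratCast_mul_sqrt h4 univ c (fun x => (k + 1 : ℕ) * (x + 1 : ℕ))
    (div_ne_zero hq two_ne_zero)
  have hs : (0 : ℝ) < √(2 * N + 1) := Real.sqrt_pos.mpr (by positivity)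
  simp only [mulVec, dotProduct, sineMatrix, of_apply] at h
  push_cast at h ⊢
  rw [← h, sum_div, sum_mul]
  refine sum_congr rfl fun x _ => ?_
  field_simp

theorem sineMatrix_mulVec_ne_of_sign {N : ℕ} [Fact (2 * N + 1).Prime] (h4 : (2 * N + 1) % 4 = 1)
    {v : Fin N → ℝ} (hv : ∀ i, v i = 1 ∨ v i = -1) :
    sineMatrix N *ᵥ v ≠ v ∧ sineMatrix N *ᵥ v ≠ -v := by
  obtain ⟨c, rfl⟩ : ∃ c : Fin N → ℤ, v = fun i => (c i : ℝ) :=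
    ⟨fun i => if v i = 1 then 1 else -1, funext fun i => by rcases hv i with h | h <;> simp [h]⟩
  obtain ⟨i₀⟩ : Nonempty (Fin N) :=
    ⟨⟨0, by have := (Fact.out : (2 * N + 1).Prime).two_le; omega⟩⟩
  have hc : c i₀ ≠ 0 := fun h0 => by rcases hv i₀ with h | h <;> simp [h0] at h
  have hne (q : ℚ) (hq : q ≠ 0) := sineMatrix_mulVec_intCast_ne_ratCast h4 c i₀ hq
  refine ⟨fun h => hne (c i₀) (by exact_mod_cast hc) ?_,
    fun h => hne (-c i₀) (by exact_mod_cast neg_ne_zero.mpr hc) ?_⟩ <;> simp [h]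

theorem stmt_14_general (N p : ℕ) (hpN : p = 2 * N + 1)
    (hp : p.Prime) (hmod : p % 4 = 1)
    (J : Matrix (Fin N) (Fin N) ℝ)
    (hJ : ∀ k x : Fin N, J k x =
      (2 / Real.sqrt p) * Real.sin (2 * Real.pi * ((k : ℕ) + 1) * ((x : ℕ) + 1) / p)) :
    (∀ v : Fin N → ℝ, (∀ i, v i = 1 ∨ v i = -1) →
        J.mulVec v ≠ v ∧ J.mulVec v ≠ -v) ∧
    (∀ σ : Fin N → ℝ, (∀ i, σ i = 1 ∨ σ i = -1) →
        -(1 / 2) * (∑ i : Fin N, ∑ j : Fin N, J i j * σ i * σ j) > -(N : ℝ) / 2) := by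
  subst hpN
  have : Fact (2 * N + 1).Prime := ⟨hp⟩
  obtain rfl : J = sineMatrix N := by
    ext k x
    rw [hJ, sineMatrix, of_apply]
    push_cast
    rfl
  refine ⟨fun v hv => sineMatrix_mulVec_ne_of_sign hmod hv, fun σ hσ => ?_⟩
  have hlt := dotProduct_mulVec_lt_of_transpose_mul_self
    (by rw [sineMatrix_transpose, sineMatrix_mul_self]) (sineMatrix_mulVec_ne_of_sign hmod hσ).1
  have hσσ : σ ⬝ᵥ σ = N := by
    have hsq (i : Fin N) : σ i * σ i = 1 := by rcases hσ i with h | h <;> rw [h] <;> norm_num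
    simp [dotProduct, hsq]
  have hquad : ∑ i, ∑ j, sineMatrix N i j * σ i * σ j = σ ⬝ᵥ (sineMatrix N *ᵥ σ) := by
    simp only [dotProduct, mulVec, mul_sum]
    exact sum_congr rfl fun i _ => sum_congr rfl fun j _ => by ring
  rw [hquad]
  linarith

theorem stmt_14 (N p : ℕ) (hN : 1 ≤ N) (hpN : p = 2 * N + 1)
    (hp : p.Prime) (hmod : p % 4 = 1)
    (J : Matrix (Fin N) (Fin N) ℝ)
    (hJ : ∀ k x : Fin N, J k x =
      (2 / Real.sqrt p) * Real.sin (2 * Real.pi * ((k : ℕ) + 1) * ((x : ℕ) + 1) / p)) :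
    (∀ v : Fin N → ℝ, (∀ i, v i = 1 ∨ v i = -1) →
        J.mulVec v ≠ v ∧ J.mulVec v ≠ -v) ∧
    (∀ σ : Fin N → ℝ, (∀ i, σ i = 1 ∨ σ i = -1) →
        -(1 / 2) * (∑ i : Fin N, ∑ j : Fin N, J i j * σ i * σ j) > -(N : ℝ) / 2) :=
  stmt_14_general N p hpN hp hmod J hJ
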